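/- Let x ∈ gl(n+1,ℂ) be in the conjugate b = g·(upper triangular)·g⁻¹ of the upper triangular Borel, where g is the identity matrix modified to have a 1 in entry (n+1,1), and suppose x is regular nilpotent. Then π_k(x), the block-diagonal part of x with respect to the splitting gl(n,ℂ) ⊕ gl(1,ℂ), is not nilpotent. -/

import Mathlib

/-!
Indexing from `0`, `g = 1 + E_{n,0}` and `g⁻¹ = 1 - E_{n,0}`, so conjugation by `g` changes `u`
only in its last row and in column `0`, from which it subtracts the last column. Hence the
upper-left `n × n` corner `A` of `x` has column `0` equal to `(-u_{i,n})_i` and agrees with `u`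
elsewhere. Rotating the columns of `A` cyclically gives an upper triangular matrix with diagonal
`±u_{i,i+1} ≠ 0`, so `A` is invertible; but the corner of a nilpotent block diagonal matrix is
nilpotent.
-/

open Matrix

/-- The centralizer of a matrix, as a submodule of the matrix algebra. -/
noncomputable def matCentralizer {m : Type*} [Fintype m] [DecidableEq m] (x : Matrix m m ℂ) :
    Submodule ℂ (Matrix m m ℂ) where
  carrier := {y | x * y = y * x}
  add_mem' := by
    intro a b ha hb
    simp only [Set.mem_setOf_eq] at *
    rw [Matrix.mul_add, Matrix.add_mul, ha, hb]
  zero_mem' := by simp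
  smul_mem' := by
    intro c a ha
    simp only [Set.mem_setOf_eq] at *
    rw [Matrix.mul_smul, Matrix.smul_mul, ha]

/-- The upper-left `k × k` corner of an `m × m` matrix. -/
def ulCorner {m k : ℕ} (h : k ≤ m) (x : Matrix (Fin m) (Fin m) ℂ) :
    Matrix (Fin k) (Fin k) ℂ :=
  x.submatrix (Fin.castLE h) (Fin.castLE h)

/-- The embedding of `gl(m)` into `gl(m+1)` with last row and column zero. -/
def matEmbed {m : ℕ} (z : Matrix (Fin m) (Fin m) ℂ) :
    Matrix (Fin (m + 1)) (Fin (m + 1)) ℂ :=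
  Matrix.of fun a b =>
    if ha : (a : ℕ) < m then (if hb : (b : ℕ) < m then z ⟨a, ha⟩ ⟨b, hb⟩ else 0) else 0

namespace Matrix

section Transvection

variable {n R : Type*} [Fintype n] [DecidableEq n] [CommRing R] {p q : n}

theorem inv_transvection (h : p ≠ q) (c : R) :
    (transvection p q c)⁻¹ = transvection p q (-c) :=
  inv_eq_right_inv <| by
    simp [transvection, Matrix.add_mul, Matrix.mul_add, h.symm, add_assoc, ← single_add]

theorem transvection_mul_mul_transvection_neg_apply_of_ne (u : Matrix n n R) (c : R)
    {i : n} (hi : i ≠ p) (j : n) :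
    (transvection p q c * u * transvection p q (-c)) i j
      = u i j - if j = q then c * u i p else 0 := by
  by_cases hj : j = q
  · subst hj
    simp [hi, sub_eq_add_neg]
  · simp [hi, hj]

end Transvection

section Blocks

variable {m n α : Type*} [Fintype m] [Fintype n] [DecidableEq m] [DecidableEq n] [Semiring α]

theorem fromBlocks_zero_zero_pow (A : Matrix m m α) (D : Matrix n n α) (k : ℕ) :
    fromBlocks A 0 0 D ^ k = fromBlocks (A ^ k) 0 0 (D ^ k) := by
  induction k with
  | zero => simp
  | succ k ih => simp [pow_succ, ih, fromBlocks_multiply]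

theorem isNilpotent_toBlocks₁₁ {M : Matrix (m ⊕ n) (m ⊕ n) α}
    (h₁₂ : M.toBlocks₁₂ = 0) (h₂₁ : M.toBlocks₂₁ = 0) (hM : IsNilpotent M) :
    IsNilpotent M.toBlocks₁₁ := by
  rw [← fromBlocks_toBlocks M, h₁₂, h₂₁] at hM
  obtain ⟨k, hk⟩ := hM
  rw [fromBlocks_zero_zero_pow, ← fromBlocks_zero] at hk
  exact ⟨k, (fromBlocks_inj.mp hk).1⟩

end Blocks

theorem isNilpotent_submatrix_castSucc {n : ℕ} {R : Type*} [CommRing R]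
    {M : Matrix (Fin (n + 1)) (Fin (n + 1)) R}
    (hcol : ∀ i : Fin n, M i.castSucc (Fin.last n) = 0)
    (hrow : ∀ j : Fin n, M (Fin.last n) j.castSucc = 0) (hM : IsNilpotent M) :
    IsNilpotent (M.submatrix Fin.castSucc Fin.castSucc) := by
  have hN := hM.map (reindexAlgEquiv R R (finSumFinEquiv (m := n) (n := 1)).symm)
  refine isNilpotent_toBlocks₁₁ ?_ ?_ hN
  · ext i j
    rw [Subsingleton.elim j 0]
    exact hcol i
  · ext i j
    rw [Subsingleton.elim i 0]
    exact hrow j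

theorem det_ne_zero_of_isUpperTriangular_submatrix {n R : Type*} [Fintype n] [DecidableEq n]
    [LinearOrder n] [CommRing R] [IsDomain R] {A : Matrix n n R} (σ : Equiv.Perm n)
    (hA : (A.submatrix id σ).IsUpperTriangular) (hdiag : ∀ i, A i (σ i) ≠ 0) :
    A.det ≠ 0 := by
  have hprod : (A.submatrix id σ).det ≠ 0 := by
    rw [det_of_isUpperTriangular hA]
    exact Finset.prod_ne_zero_iff.mpr fun i _ => hdiag i
  rw [det_permute'] at hprod
  exact right_ne_zero_of_mul hprod

end Matrix

theorem det_submatrix_castSucc_transvection_conj_ne_zero {m : ℕ} {R : Type*} [CommRing R]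
    [IsDomain R] {u : Matrix (Fin (m + 2)) (Fin (m + 2)) R}
    (hupper : ∀ i j : Fin (m + 2), (j : ℕ) ≤ i → u i j = 0)
    (hsd : ∀ i : Fin (m + 1), u i.castSucc i.succ ≠ 0) :
    ((transvection (Fin.last (m + 1)) 0 1 * u * transvection (Fin.last (m + 1)) 0 (-1)).submatrix
      Fin.castSucc Fin.castSucc).det ≠ 0 := by
  set A := (transvection (Fin.last (m + 1)) 0 1 * u *
    transvection (Fin.last (m + 1)) 0 (-1)).submatrix Fin.castSucc Fin.castSucc with hA
  have hentry : ∀ i j, A i (finRotate (m + 1) j)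
      = (if j = Fin.last m then -1 else 1) * u i.castSucc j.succ := by
    intro i j
    rw [hA, submatrix_apply, transvection_mul_mul_transvection_neg_apply_of_ne _ _
      i.castSucc_ne_last]
    by_cases hj : j = Fin.last m
    · rw [hj, finRotate_last, Fin.castSucc_zero, Fin.succ_last, if_pos rfl, if_pos rfl,
        hupper _ _ (Nat.zero_le _)]
      ring
    · have hrot : (finRotate (m + 1) j).castSucc = j.succ :=
        Fin.ext (by rw [Fin.val_castSucc, coe_finRotate_of_ne_last hj, Fin.val_succ])
      rw [hrot, if_neg j.succ_ne_zero, if_neg hj]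
      ring
  refine det_ne_zero_of_isUpperTriangular_submatrix (finRotate (m + 1)) (fun i j hji => ?_)
    fun i => ?_
  · rw [submatrix_apply, id, hentry, hupper _ _ (by simpa [Nat.succ_le_iff] using hji), mul_zero]
  · rw [hentry]
    exact mul_ne_zero (by split_ifs <;> norm_num) (hsd i)

/-- Let `x` be a regular nilpotent element of the Borel subalgebra
`b = g · (upper triangular) · g⁻¹` of `gl(n+1,ℂ)`, where `g` is the identity
matrix modified to have a `1` in entry `(n+1,1)`; i.e. `x = g u g⁻¹` with `u`
strictly upper triangular with nonzero first superdiagonal.  Then `π_k(x)`, the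
block diagonal part of `x` with respect to the splitting `gl(n,ℂ) ⊕ gl(1,ℂ)`,
is not nilpotent. -/
theorem stmt10 (n : ℕ) (hn : 0 < n)
    (u : Matrix (Fin (n + 1)) (Fin (n + 1)) ℂ)
    (hupper : ∀ i j : Fin (n + 1), (j : ℕ) ≤ (i : ℕ) → u i j = 0)
    (hsd : ∀ i : Fin n, u i.castSucc i.succ ≠ 0)
    (g x : Matrix (Fin (n + 1)) (Fin (n + 1)) ℂ)
    (hg : g = 1 + Matrix.single (Fin.last n) (0 : Fin (n + 1)) (1 : ℂ))
    (hx : x = g * u * g⁻¹) :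
    ¬ IsNilpotent (Matrix.of fun k j : Fin (n + 1) =>
      if k = Fin.last n ∧ j ≠ Fin.last n then 0
      else if j = Fin.last n ∧ k ≠ Fin.last n then 0
      else x k j) := by
  intro hnil
  obtain ⟨m, rfl⟩ : ∃ m, n = m + 1 := ⟨n - 1, by omega⟩
  have hx' : x = transvection (Fin.last (m + 1)) 0 1 * u *
      transvection (Fin.last (m + 1)) 0 (-1) := by
    rw [hx, hg, ← transvection, inv_transvection Fin.last_pos.ne']
  have hcorner : IsNilpotent (x.submatrix Fin.castSucc Fin.castSucc) := by
    convert isNilpotent_submatrix_castSucc (fun i => by simp [i.castSucc_ne_last])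
      (fun j => by simp [j.castSucc_ne_last]) hnil using 1
    ext i j
    simp [i.castSucc_ne_last, j.castSucc_ne_last]
  rw [hx'] at hcorner
  exact hcorner.not_isUnit <| (isUnit_iff_isUnit_det _).mpr <|
    isUnit_iff_ne_zero.mpr (det_submatrix_castSucc_transvection_conj_ne_zero hupper hsd)
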